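/- Let N be a finite set with |N| ≥ 3, let S be a purely min-semi-balanced system on N and let Y ∈ S be its exceptional set. Then Z := N\Y is not in S, and B := (S\{Y}) ∪ {Z} is a min-balanced system on N with |B| ≥ 3. -/
import Mathlib


open Finset

variable {α : Type*} [Fintype α] [DecidableEq α]

/-- Incidence (0/1 indicator) vector of a subset `S` of the player set. -/
def chi (S : Finset α) : α → ℝ := fun i => if i ∈ S then 1 else 0

/-- A non-trivial set system on `N`: nonempty, not containing `∅` nor `N`. -/
def IsNontrivial (𝒮 : Finset (Finset α)) : Prop :=
  𝒮.Nonempty ∧ ∅ ∉ 𝒮 ∧ (Finset.univ : Finset α) ∉ 𝒮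

/-- A combination is semi-conic if at most one coefficient is strictly negative. -/
def SemiConic (𝒮 : Finset (Finset α)) (lam : Finset α → ℝ) : Prop :=
  (𝒮.filter fun S => lam S < 0).card ≤ 1

/-- The combination `∑_{S ∈ 𝒮} lam S • χ_S` yields the constant vector `[r,…,r]`. -/
def CombYields (𝒮 : Finset (Finset α)) (lam : Finset α → ℝ) (r : ℝ) : Prop :=
  ∀ i : α, ∑ S ∈ 𝒮, lam S * chi S i = r

/-- A semi-balanced set system on `N`. -/
def IsSemiBalanced (𝒮 : Finset (Finset α)) : Prop :=
  IsNontrivial 𝒮 ∧ ∃ (lam : Finset α → ℝ) (r : ℝ),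
    CombYields 𝒮 lam r ∧ SemiConic 𝒮 lam ∧ ∀ S ∈ 𝒮, lam S ≠ 0

/-- A minimal semi-balanced set system on `N`. -/
def IsMinSemiBalanced (𝒮 : Finset (Finset α)) : Prop :=
  IsSemiBalanced 𝒮 ∧ ∀ 𝒞 ⊂ 𝒮, ¬ IsSemiBalanced 𝒞

/-- A balanced set system on `N`. -/
def IsBalanced (ℬ : Finset (Finset α)) : Prop :=
  IsNontrivial ℬ ∧ ∃ lam : Finset α → ℝ,
    (∀ S ∈ ℬ, 0 < lam S) ∧ ∀ i : α, ∑ S ∈ ℬ, lam S * chi S i = 1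

/-- A minimal balanced set system on `N`. -/
def IsMinBalanced (ℬ : Finset (Finset α)) : Prop :=
  IsBalanced ℬ ∧ ∀ 𝒞 ⊂ ℬ, ¬ IsBalanced 𝒞

/-- A set `T ∈ 𝒮` is exceptional within `𝒮`. -/
def IsExceptional (𝒮 : Finset (Finset α)) (T : Finset α) : Prop :=
  T ∈ 𝒮 ∧ ∃ (lam : Finset α → ℝ) (r : ℝ),
    CombYields 𝒮 lam r ∧ lam T < 0 ∧ ∀ S ∈ 𝒮, S ≠ T → 0 ≤ lam S

lemma chi_nonneg (S : Finset α) (i : α) : 0 ≤ chi S i := by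
  unfold chi; split <;> norm_num

lemma chi_compl (Y : Finset α) (i : α) : chi (Yᶜ) i = 1 - chi Y i := by
  unfold chi; by_cases h : i ∈ Y <;> simp [h]

lemma chi_mem {S : Finset α} {i : α} (h : i ∈ S) : chi S i = 1 := by simp [chi, h]

lemma chi_not_mem {S : Finset α} {i : α} (h : i ∉ S) : chi S i = 0 := by simp [chi, h]

lemma balanced_semiBalanced {ℬ : Finset (Finset α)} (h : IsBalanced ℬ) :
    IsSemiBalanced ℬ := by
  obtain ⟨hnt, lam, hpos, hsum⟩ := h
  refine ⟨hnt, lam, 1, hsum, ?_, fun S hS => (hpos S hS).ne'⟩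
  unfold SemiConic
  have : (ℬ.filter fun S => lam S < 0) = ∅ :=
    Finset.filter_eq_empty_iff.2 fun S hS => not_lt.2 (hpos S hS).le
  simp [this]

/-- From minimality, the exceptional combination has all nonzero (hence strictly
positive off `Y`) coefficients, and nonnegative constant. -/
lemma exceptional_strict {𝒮 : Finset (Finset α)} (hmin : IsMinSemiBalanced 𝒮)
    {Y : Finset α} (hexc : IsExceptional 𝒮 Y) :
    ∃ (mu : Finset α → ℝ) (r : ℝ), CombYields 𝒮 mu r ∧ mu Y < 0 ∧
      (∀ S ∈ 𝒮, S ≠ Y → 0 < mu S) ∧ 0 ≤ r := by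
  classical
  obtain ⟨hY, mu, r, hcy, hneg, hnn⟩ := hexc
  obtain ⟨⟨hne, hempty, huniv⟩, _⟩ := hmin.1
  have hYne : Y ≠ ∅ := fun h => hempty (h ▸ hY)
  have hYnu : Y ≠ univ := fun h => huniv (h ▸ hY)
  -- all coefficients nonzero
  set 𝒞 : Finset (Finset α) := 𝒮.filter (fun S => mu S ≠ 0) with h𝒞
  have h𝒞sub : 𝒞 ⊆ 𝒮 := Finset.filter_subset _ _
  have hY𝒞 : Y ∈ 𝒞 := Finset.mem_filter.2 ⟨hY, hneg.ne⟩
  have h𝒞sb : IsSemiBalanced 𝒞 := by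
    refine ⟨⟨⟨Y, hY𝒞⟩, fun h => hempty (h𝒞sub h), fun h => huniv (h𝒞sub h)⟩,
      mu, r, ?_, ?_, fun S hS => (Finset.mem_filter.1 hS).2⟩
    · intro i
      rw [← hcy i]
      exact Finset.sum_filter_of_ne (fun S _ h hz => h (by simp [hz]))
    · unfold SemiConic
      have hsub : (𝒞.filter fun S => mu S < 0) ⊆ {Y} := by
        intro S hS
        obtain ⟨h𝒞S, hSneg⟩ := Finset.mem_filter.1 hS
        have hS𝒮 : S ∈ 𝒮 := h𝒞sub h𝒞S
        by_contra h
        simp only [Finset.mem_singleton] at h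
        exact absurd (hnn S hS𝒮 h) (not_le.2 hSneg)
      calc (𝒞.filter fun S => mu S < 0).card ≤ ({Y} : Finset (Finset α)).card :=
            Finset.card_le_card hsub
        _ = 1 := Finset.card_singleton Y
  have h𝒞eq : 𝒞 = 𝒮 := by
    by_contra h
    exact hmin.2 𝒞 (lt_of_le_of_ne h𝒞sub h) h𝒞sb
  have hpos : ∀ S ∈ 𝒮, S ≠ Y → 0 < mu S := by
    intro S hS hSY
    have : mu S ≠ 0 := by
      have : S ∈ 𝒞 := h𝒞eq ▸ hS
      exact (Finset.mem_filter.1 this).2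
    exact lt_of_le_of_ne (hnn S hS hSY) (Ne.symm this)
  -- r ≥ 0
  have hrnn : 0 ≤ r := by
    have hcne : (Yᶜ : Finset α) ≠ ∅ := fun h => hYnu ((Finset.compl_eq_empty_iff Y).1 h)
    obtain ⟨i, hi⟩ := Finset.nonempty_iff_ne_empty.2 hcne
    have hiY : i ∉ Y := Finset.mem_compl.1 hi
    rw [← hcy i]
    refine Finset.sum_nonneg fun S hS => ?_
    by_cases hSY : S = Y
    · subst hSY; rw [chi_not_mem hiY]; simp
    · exact mul_nonneg (hpos S hS hSY).le (chi_nonneg S i)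
  exact ⟨mu, r, hcy, hneg, hpos, hrnn⟩

lemma sum_erase_eq {𝒮 : Finset (Finset α)} {mu : Finset α → ℝ} {r : ℝ}
    (hcy : CombYields 𝒮 mu r) {Y : Finset α} (hY : Y ∈ 𝒮) (i : α) :
    ∑ S ∈ 𝒮.erase Y, mu S * chi S i = r - mu Y * chi Y i := by
  have h := Finset.sum_erase_add 𝒮 (fun S => mu S * chi S i) hY
  rw [hcy i] at h
  have h' : (∑ S ∈ 𝒮.erase Y, mu S * chi S i) + mu Y * chi Y i = r := h
  linarith

theorem stmt14 (h3 : 3 ≤ Fintype.card α) (𝒮 : Finset (Finset α))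
    (hmin : IsMinSemiBalanced 𝒮) (hnb : ¬ IsBalanced 𝒮)
    (Y : Finset α) (hY : Y ∈ 𝒮) (hexc : IsExceptional 𝒮 Y) :
    Yᶜ ∉ 𝒮 ∧ IsMinBalanced (insert Yᶜ (𝒮.erase Y)) ∧
    3 ≤ (insert Yᶜ (𝒮.erase Y)).card := by
  classical
  obtain ⟨hne, hempty, huniv⟩ := hmin.1.1
  have hminimal := hmin.2
  obtain ⟨mu, r, hcy, hmuY, hmupos, hrnn⟩ := exceptional_strict hmin hexc
  have hYne : Y ≠ ∅ := fun h => hempty (h ▸ hY)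
  have hYnu : Y ≠ univ := fun h => huniv (h ▸ hY)
  have hcompl_ne : Yᶜ ≠ Y := by
    intro h
    obtain ⟨i, hi⟩ := Finset.nonempty_iff_ne_empty.2 hYne
    exact (Finset.mem_compl.1 (h.symm ▸ hi)) hi
  have hYc_ne_empty : (Yᶜ : Finset α) ≠ ∅ := fun h => hYnu ((Finset.compl_eq_empty_iff Y).1 h)
  have hYc_ne_univ : (Yᶜ : Finset α) ≠ univ := fun h => hYne ((Finset.compl_eq_univ_iff Y).1 h)
  -- STEP 1 : Yᶜ ∉ 𝒮
  have hYc𝒮 : Yᶜ ∉ 𝒮 := by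
    intro hmem
    have hYc𝒞 : Yᶜ ∈ 𝒮.erase Y := Finset.mem_erase.2 ⟨hcompl_ne, hmem⟩
    have hposE : ∀ S ∈ 𝒮.erase Y,
        0 < (if S = Yᶜ then mu S - mu Y else mu S) := by
      intro S hS
      obtain ⟨hSY, hS𝒮⟩ := Finset.mem_erase.1 hS
      by_cases h : S = Yᶜ
      · rw [if_pos h]
        have := hmupos S hS𝒮 hSY
        linarith
      · rw [if_neg h]
        exact hmupos S hS𝒮 hSY
    have hsb : IsSemiBalanced (𝒮.erase Y) := by
      refine ⟨⟨⟨Yᶜ, hYc𝒞⟩, fun h => hempty (Finset.erase_subset _ _ h),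
        fun h => huniv (Finset.erase_subset _ _ h)⟩,
        fun S => if S = Yᶜ then mu S - mu Y else mu S, r - mu Y, ?_, ?_, ?_⟩
      · intro i
        have key : ∀ S ∈ 𝒮.erase Y,
            (if S = Yᶜ then mu S - mu Y else mu S) * chi S i
              = mu S * chi S i + (if S = Yᶜ then (-mu Y) * chi S i else 0) := by
          intro S _
          by_cases h : S = Yᶜ <;> simp [h] <;> ring
        rw [Finset.sum_congr rfl key, Finset.sum_add_distrib,
          Finset.sum_ite_eq' (𝒮.erase Y) Yᶜ (fun S => (-mu Y) * chi S i),
          if_pos hYc𝒞, sum_erase_eq hcy hY i, chi_compl]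
        ring
      · unfold SemiConic
        have : ((𝒮.erase Y).filter fun S =>
            (if S = Yᶜ then mu S - mu Y else mu S) < 0) = ∅ :=
          Finset.filter_eq_empty_iff.2 fun S hS => not_lt.2 (hposE S hS).le
        simp [this]
      · exact fun S hS => (hposE S hS).ne'
    exact hminimal (𝒮.erase Y) (Finset.erase_ssubset hY) hsb
  -- STEP 2 : 𝒮.card ≥ 3
  have hcard3 : 3 ≤ 𝒮.card := by
    obtain ⟨j, hj⟩ := Finset.nonempty_iff_ne_empty.2 hYc_ne_empty
    have hjY : j ∉ Y := Finset.mem_compl.1 hj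
    obtain ⟨i0, hi0⟩ := Finset.nonempty_iff_ne_empty.2 hYne
    have hS2 : ∃ S ∈ 𝒮, S ≠ Y := by
      by_contra h
      push_neg at h
      have h𝒮 : 𝒮 = {Y} := Finset.eq_singleton_iff_unique_mem.2 ⟨hY, h⟩
      have e1 := hcy i0
      have e2 := hcy j
      rw [h𝒮, Finset.sum_singleton] at e1 e2
      rw [chi_mem hi0] at e1
      rw [chi_not_mem hjY] at e2
      simp at e1 e2
      linarith
    obtain ⟨S, hS, hSY⟩ := hS2
    have hmuS := hmupos S hS hSY
    have hSnu : S ≠ univ := fun h => huniv (h ▸ hS)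
    have hT : ∃ T ∈ 𝒮, T ≠ Y ∧ T ≠ S := by
      by_contra h
      push_neg at h
      have h𝒮 : 𝒮 = {Y, S} := by
        apply Finset.Subset.antisymm
        · intro x hx
          by_cases hxY : x = Y
          · simp [hxY]
          · simp [h x hx hxY]
        · intro x hx
          rcases Finset.mem_insert.1 hx with h1 | h1
          · exact h1 ▸ hY
          · exact (Finset.mem_singleton.1 h1) ▸ hS
      have hsum : ∀ i : α, mu Y * chi Y i + mu S * chi S i = r := by
        intro i
        have := hcy i
        rwa [h𝒮, Finset.sum_pair (Ne.symm hSY)] at this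
      by_cases hu : Y ∪ S = univ
      · have hjS : j ∈ S := by
          have : j ∈ Y ∪ S := hu ▸ Finset.mem_univ j
          exact (Finset.mem_union.1 this).resolve_left hjY
        have hScne : (Sᶜ : Finset α) ≠ ∅ := fun h => hSnu ((Finset.compl_eq_empty_iff S).1 h)
        obtain ⟨k, hk⟩ := Finset.nonempty_iff_ne_empty.2 hScne
        have hkS : k ∉ S := Finset.mem_compl.1 hk
        have hkY : k ∈ Y := by
          have : k ∈ Y ∪ S := hu ▸ Finset.mem_univ k
          exact (Finset.mem_union.1 this).resolve_right hkS
        have e1 := hsum j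
        have e2 := hsum k
        rw [chi_not_mem hjY, chi_mem hjS] at e1
        rw [chi_mem hkY, chi_not_mem hkS] at e2
        simp at e1 e2
        linarith
      · have hUcne : ((Y ∪ S)ᶜ : Finset α) ≠ ∅ :=
          fun h => hu ((Finset.compl_eq_empty_iff (Y ∪ S)).1 h)
        obtain ⟨k, hk⟩ := Finset.nonempty_iff_ne_empty.2 hUcne
        have hkYS := Finset.mem_compl.1 hk
        have hkY : k ∉ Y := fun h => hkYS (Finset.mem_union_left _ h)
        have hkS : k ∉ S := fun h => hkYS (Finset.mem_union_right _ h)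
        have e0 := hsum k
        rw [chi_not_mem hkY, chi_not_mem hkS] at e0
        simp at e0
        by_cases hsub : Y ⊆ S
        · have : ¬ S ⊆ Y := fun h => hSY (Finset.Subset.antisymm h hsub)
          obtain ⟨m, hmS, hmY⟩ := Finset.not_subset.1 this
          have e := hsum m
          rw [chi_not_mem hmY, chi_mem hmS] at e
          simp at e
          linarith
        · obtain ⟨m, hmY, hmS⟩ := Finset.not_subset.1 hsub
          have e := hsum m
          rw [chi_mem hmY, chi_not_mem hmS] at e
          simp at e
          linarith
    obtain ⟨T, hT𝒮, hTY, hTS⟩ := hT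
    have hsub : ({Y, S, T} : Finset (Finset α)) ⊆ 𝒮 := by
      intro x hx
      simp only [Finset.mem_insert, Finset.mem_singleton] at hx
      rcases hx with h | h | h
      · exact h ▸ hY
      · exact h ▸ hS
      · exact h ▸ hT𝒮
    have hc : ({Y, S, T} : Finset (Finset α)).card = 3 := by
      rw [Finset.card_insert_of_notMem (by simp [Ne.symm hSY, Ne.symm hTY]),
        Finset.card_insert_of_notMem (by simp [Ne.symm hTS]), Finset.card_singleton]
    calc 3 = ({Y, S, T} : Finset (Finset α)).card := hc.symm
      _ ≤ 𝒮.card := Finset.card_le_card hsub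
  -- basic facts about B
  have hYcE : Yᶜ ∉ 𝒮.erase Y := fun h => hYc𝒮 (Finset.mem_erase.1 h).2
  have hYnotB : Y ∉ insert Yᶜ (𝒮.erase Y) := by
    intro h
    rcases Finset.mem_insert.1 h with h1 | h1
    · exact hcompl_ne h1.symm
    · exact (Finset.mem_erase.1 h1).1 rfl
  have hBcard : (insert Yᶜ (𝒮.erase Y)).card = 𝒮.card := by
    rw [Finset.card_insert_of_notMem hYcE, Finset.card_erase_of_mem hY]
    omega
  have hc : 0 < r - mu Y := by linarith
  -- STEP 3 : B is balanced
  have hBbal : IsBalanced (insert Yᶜ (𝒮.erase Y)) := by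
    refine ⟨⟨⟨Yᶜ, Finset.mem_insert_self _ _⟩, ?_, ?_⟩,
      fun S => (if S = Yᶜ then -mu Y else mu S) / (r - mu Y), ?_, ?_⟩
    · intro h
      rcases Finset.mem_insert.1 h with h1 | h1
      · exact hYc_ne_empty h1.symm
      · exact hempty (Finset.mem_erase.1 h1).2
    · intro h
      rcases Finset.mem_insert.1 h with h1 | h1
      · exact hYc_ne_univ h1.symm
      · exact huniv (Finset.mem_erase.1 h1).2
    · intro S hS
      rcases Finset.mem_insert.1 hS with h1 | h1
      · subst h1
        beta_reduce
        rw [if_pos rfl]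
        exact div_pos (neg_pos.2 hmuY) hc
      · obtain ⟨hSY, hS𝒮⟩ := Finset.mem_erase.1 h1
        have hSYc : S ≠ Yᶜ := fun h => hYc𝒮 (h ▸ hS𝒮)
        beta_reduce
        rw [if_neg hSYc]
        exact div_pos (hmupos S hS𝒮 hSY) hc
    · intro i
      rw [Finset.sum_insert hYcE]
      beta_reduce
      rw [if_pos rfl]
      have hterm : ∀ S ∈ 𝒮.erase Y,
          (if S = Yᶜ then -mu Y else mu S) / (r - mu Y) * chi S i
            = mu S * chi S i / (r - mu Y) := by
        intro S hS
        have hSYc : S ≠ Yᶜ := fun h => hYc𝒮 (h ▸ (Finset.mem_erase.1 hS).2)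
        rw [if_neg hSYc]
        ring
      rw [Finset.sum_congr rfl hterm, ← Finset.sum_div, sum_erase_eq hcy hY i, chi_compl]
      field_simp
      ring
  -- STEP 4 : minimality of B
  have hBmin : ∀ 𝒞 ⊂ insert Yᶜ (𝒮.erase Y), ¬ IsBalanced 𝒞 := by
    intro 𝒞 h𝒞ss hbal𝒞
    have h𝒞B := h𝒞ss.subset
    obtain ⟨⟨h𝒞ne, h𝒞em, h𝒞un⟩, lam, hlampos, hlamsum⟩ := hbal𝒞
    by_cases hYc𝒞 : Yᶜ ∈ 𝒞
    · have hYnotE : Y ∉ 𝒞.erase Yᶜ := fun h => hYnotB (h𝒞B (Finset.erase_subset _ _ h))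
      have hmemE : ∀ x ∈ 𝒞.erase Yᶜ, x ∈ 𝒮.erase Y := by
        intro x hx
        obtain ⟨hxYc, hx𝒞⟩ := Finset.mem_erase.1 hx
        exact (Finset.mem_insert.1 (h𝒞B hx𝒞)).resolve_left hxYc
      have hsub𝒮 : insert Y (𝒞.erase Yᶜ) ⊆ 𝒮 := by
        intro x hx
        rcases Finset.mem_insert.1 hx with h1 | h1
        · exact h1 ▸ hY
        · exact (Finset.mem_erase.1 (hmemE x h1)).2
      have hcardlt : (insert Y (𝒞.erase Yᶜ)).card < 𝒮.card := by
        rw [Finset.card_insert_of_notMem hYnotE, Finset.card_erase_of_mem hYc𝒞]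
        have h1 := Finset.card_lt_card h𝒞ss
        have h2 : 1 ≤ 𝒞.card := Finset.card_pos.2 ⟨Yᶜ, hYc𝒞⟩
        omega
      have hss : insert Y (𝒞.erase Yᶜ) ⊂ 𝒮 := by
        refine lt_of_le_of_ne hsub𝒮 ?_
        intro h
        rw [h] at hcardlt
        exact lt_irrefl _ hcardlt
      have hlamYc := hlampos Yᶜ hYc𝒞
      have hsb : IsSemiBalanced (insert Y (𝒞.erase Yᶜ)) := by
        refine ⟨⟨⟨Y, Finset.mem_insert_self _ _⟩, ?_, ?_⟩,
          fun S => if S = Y then -lam Yᶜ else lam S, 1 - lam Yᶜ, ?_, ?_, ?_⟩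
        · intro h
          rcases Finset.mem_insert.1 h with h1 | h1
          · exact hYne h1.symm
          · exact h𝒞em (Finset.mem_erase.1 h1).2
        · intro h
          rcases Finset.mem_insert.1 h with h1 | h1
          · exact hYnu h1.symm
          · exact h𝒞un (Finset.mem_erase.1 h1).2
        · intro i
          rw [Finset.sum_insert hYnotE]
          beta_reduce
          rw [if_pos rfl]
          have hterm : ∀ S ∈ 𝒞.erase Yᶜ,
              (if S = Y then -lam Yᶜ else lam S) * chi S i = lam S * chi S i := by
            intro S hS
            have hSY : S ≠ Y := by rintro rfl; exact hYnotE hS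
            rw [if_neg hSY]
          have h1 : ∑ S ∈ 𝒞.erase Yᶜ, lam S * chi S i = 1 - lam Yᶜ * chi Yᶜ i := by
            have h := Finset.sum_erase_add 𝒞 (fun S => lam S * chi S i) hYc𝒞
            rw [hlamsum i] at h
            have h' : (∑ S ∈ 𝒞.erase Yᶜ, lam S * chi S i) + lam Yᶜ * chi Yᶜ i = 1 := h
            linarith
          rw [Finset.sum_congr rfl hterm, h1, chi_compl]
          ring
        · unfold SemiConic
          have heq : ((insert Y (𝒞.erase Yᶜ)).filter fun S =>
              (if S = Y then -lam Yᶜ else lam S) < 0) = {Y} := by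
            apply Finset.eq_singleton_iff_unique_mem.2
            constructor
            · exact Finset.mem_filter.2 ⟨Finset.mem_insert_self _ _,
                by rw [if_pos rfl]; linarith⟩
            · intro x hx
              obtain ⟨hx𝒞', hxneg⟩ := Finset.mem_filter.1 hx
              by_contra hxY
              rw [if_neg hxY] at hxneg
              have hx𝒞 : x ∈ 𝒞 :=
                (Finset.mem_erase.1 ((Finset.mem_insert.1 hx𝒞').resolve_left hxY)).2
              exact absurd (hlampos x hx𝒞) (not_lt.2 hxneg.le)
          rw [heq, Finset.card_singleton]
        · intro S hS
          beta_reduce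
          by_cases h : S = Y
          · rw [if_pos h]
            linarith
          · rw [if_neg h]
            have hS𝒞 : S ∈ 𝒞 :=
              (Finset.mem_erase.1 ((Finset.mem_insert.1 hS).resolve_left h)).2
            exact (hlampos S hS𝒞).ne'
      exact hminimal _ hss hsb
    · have hsub : 𝒞 ⊆ 𝒮.erase Y := fun x hx =>
        (Finset.mem_insert.1 (h𝒞B hx)).resolve_left (fun h => hYc𝒞 (h ▸ hx))
      have hss : 𝒞 ⊂ 𝒮 := lt_of_le_of_lt hsub (Finset.erase_ssubset hY)
      exact hminimal 𝒞 hss (balanced_semiBalanced ⟨⟨h𝒞ne, h𝒞em, h𝒞un⟩, lam, hlampos, hlamsum⟩)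
  exact ⟨hYc𝒮, ⟨hBbal, hBmin⟩, by rw [hBcard]; exact hcard3⟩
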